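/- arXiv:1212.6632 — 4 statements merged into one kernel-verified Lean document; each statement's English description precedes it below -/
import Mathlib

section
/- Let G be a finite strongly connected directed graph with edge weights in ℝ^k, and let (t_1,...,t_k) be a vector. If for every α > 0 there exists a finite cyclic path in G whose average weight is at least t_i - α in every dimension i, then there exists an infinite path in G whose mean-payoff vector (defined coordinatewise as the liminf of the average weight of its prefixes) is at least (t_1,...,t_k) in every dimension. -/
/-!
Fix a vertex `v₀`. Walking from `v₀` to a cycle of average at least `t - α / 2`, going around it
often enough and walking back gives, for every `α > 0`, a closed walk at `v₀` of average at least
`t - α`. The infinite path concatenates such closed walks for `α = 1 / (j + 1)`, advancing `j` so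
slowly that each block is short compared with everything before it: the averages at block
boundaries then tend to at least `t`, and inside a block they drop by at most a constant times the
relative length of the block.
-/

open Filter Finset Asymptotics Topology

section Walks

variable {V M : Type*} [AddCommMonoid M]

def IsWalk (E : V → V → Prop) (n : ℕ) (p : ℕ → V) : Prop :=
  ∀ m < n, E (p m) (p (m + 1))

def walkSum (f : V → V → M) (n : ℕ) (p : ℕ → V) : M :=
  ∑ m ∈ range n, f (p m) (p (m + 1))

def walkAppend (a : ℕ) (p q : ℕ → V) : ℕ → V :=
  fun m => if m < a then p m else q (m - a)

variable {E : V → V → Prop} {f : V → V → M} {a b n : ℕ} {p q : ℕ → V}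

lemma walkAppend_add (a m : ℕ) (p q : ℕ → V) : walkAppend a p q (a + m) = q m := by
  simp [walkAppend]

lemma walkAppend_of_le (h : p a = q 0) {m : ℕ} (hm : m ≤ a) : walkAppend a p q m = p m := by
  rcases hm.lt_or_eq with hm | rfl
  · exact if_pos hm
  · simp [walkAppend, h]

lemma IsWalk.append (hp : IsWalk E a p) (hq : IsWalk E b q) (h : p a = q 0) :
    IsWalk E (a + b) (walkAppend a p q) := by
  intro m hm
  by_cases hma : m < a
  · rw [walkAppend_of_le h hma.le, walkAppend_of_le h hma]
    exact hp m hma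
  · obtain ⟨j, rfl⟩ := Nat.exists_eq_add_of_le (not_lt.1 hma)
    rw [walkAppend_add, add_assoc, walkAppend_add]
    exact hq j (by omega)

lemma walkSum_append (h : p a = q 0) :
    walkSum f (a + b) (walkAppend a p q) = walkSum f a p + walkSum f b q := by
  unfold walkSum
  rw [sum_range_add]
  congr 1
  · refine sum_congr rfl fun m hm => ?_
    have hm : m < a := mem_range.1 hm
    rw [walkAppend_of_le h hm.le, walkAppend_of_le h hm]
  · refine sum_congr rfl fun m _ => ?_
    rw [walkAppend_add, add_assoc, walkAppend_add]

lemma apply_succ_mod_of_closed (hp : p n = p 0) (m : ℕ) : p ((m + 1) % n) = p (m % n + 1) := by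
  rcases Nat.eq_zero_or_pos n with rfl | hn
  · simp
  rw [← Nat.mod_add_mod]
  obtain h | h : m % n + 1 < n ∨ m % n + 1 = n := by have := Nat.mod_lt m hn; omega
  · rw [Nat.mod_eq_of_lt h]
  · rw [h, Nat.mod_self, hp]

lemma IsWalk.comp_mod (hn : 0 < n) (hp : IsWalk E n p) (hcl : p n = p 0) (N : ℕ) :
    IsWalk E N (fun m => p (m % n)) := by
  intro m _
  simp only [apply_succ_mod_of_closed hcl]
  exact hp _ (Nat.mod_lt m hn)

lemma walkSum_comp_mod (hcl : p n = p 0) (r : ℕ) :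
    walkSum f (r * n) (fun m => p (m % n)) = r • walkSum f n p := by
  induction r with
  | zero => simp [walkSum]
  | succ r ih =>
    rw [succ_nsmul, ← ih, add_mul, one_mul, walkSum, walkSum, walkSum, sum_range_add]
    congr 1
    refine sum_congr rfl fun j hj => ?_
    simp only [apply_succ_mod_of_closed hcl, Nat.mul_add_mod_self_right,
      Nat.mod_eq_of_lt (mem_range.1 hj)]

end Walks

lemma abs_walkSum_le {V : Type*} {f : V → V → ℝ} {B : ℝ} (hf : ∀ u v, |f u v| ≤ B) (n : ℕ)
    (p : ℕ → V) : |walkSum f n p| ≤ n * B :=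
  (abs_sum_le_sum_abs _ _).trans <| by
    simpa using sum_le_card_nsmul (range n) _ B fun m _ => hf (p m) (p (m + 1))

lemma avg_padding_bound {τ α B s A N : ℝ} (hα : 0 < α) (hA : 0 ≤ A) (hN : 0 < N)
    (hs : (τ - α / 2) * N ≤ s) (hsB : s ≤ N * B) (hNA : 4 * B * A / α ≤ N) :
    (τ - α) * (A + N) ≤ s - B * A := by
  have hτ : τ - α / 2 ≤ B := le_of_mul_le_mul_right (by linarith) hN
  rw [div_le_iff₀ hα] at hNA
  nlinarith

theorem exists_closed_walk_avg_ge {V ι : Type*} {E : V → V → Prop} {w : V → V → ι → ℝ}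
    {t : ι → ℝ} {B : ℝ} (hw : ∀ u v i, |w u v i| ≤ B)
    (hconn : ∀ u v : V, ∃ n p, p 0 = u ∧ p n = v ∧ IsWalk E n p)
    (hcyc : ∀ α : ℝ, 0 < α → ∃ n p, 0 < n ∧ p n = p 0 ∧ IsWalk E n p ∧
      ∀ i, t i - α ≤ walkSum (fun u v => w u v i) n p / n)
    (v₀ : V) {α : ℝ} (hα : 0 < α) :
    ∃ n p, 0 < n ∧ p 0 = v₀ ∧ p n = v₀ ∧ IsWalk E n p ∧
      ∀ i, (t i - α) * n ≤ walkSum (fun u v => w u v i) n p := by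
  obtain ⟨n, c, hn, hc, hcE, hcw⟩ := hcyc (α / 2) (by positivity)
  obtain ⟨a, p, hp0, hpa, hpE⟩ := hconn v₀ (c 0)
  obtain ⟨b, q, hq0, hqb, hqE⟩ := hconn (c 0) v₀
  -- the cycle is repeated often enough to make the two connecting walks negligible
  set r := ⌈4 * B * (a + b) / α⌉₊ + 1
  have hrn : 0 < r * n := Nat.mul_pos (Nat.succ_pos _) hn
  set cr : ℕ → V := fun m => c (m % n)
  have hcr0 : cr (r * n) = q 0 := by simp [cr, hq0]
  have hpcr : p a = walkAppend (r * n) cr q 0 := by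
    rw [walkAppend_of_le hcr0 (Nat.zero_le _), hpa]; simp [cr]
  refine ⟨a + (r * n + b), walkAppend a p (walkAppend (r * n) cr q), by omega, ?_, ?_,
    (hpE.append ((hcE.comp_mod hn hc _).append hqE hcr0) hpcr), fun i => ?_⟩
  · rw [walkAppend_of_le hpcr (Nat.zero_le _), hp0]
  · rw [walkAppend_add, walkAppend_add, hqb]
  set f := fun u v => w u v i
  have hf : ∀ u v, |f u v| ≤ B := fun u v => hw u v i
  have hpB := neg_le_of_abs_le (abs_walkSum_le hf a p)
  have hqB := neg_le_of_abs_le (abs_walkSum_le hf b q)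
  have hcB := le_of_abs_le (abs_walkSum_le hf n c)
  have hct : (t i - α / 2) * n ≤ walkSum f n c := (le_div_iff₀ (by positivity)).1 (hcw i)
  have hr : 4 * B * (a + b) / α ≤ (r * n : ℕ) := by
    have : ⌈4 * B * (a + b) / α⌉₊ ≤ r * n :=
      (Nat.le_succ _).trans (Nat.le_mul_of_pos_right r hn)
    exact (Nat.le_ceil _).trans (by exact_mod_cast this)
  have key := avg_padding_bound (τ := t i) (s := r * walkSum f n c) hα
    (by positivity : (0 : ℝ) ≤ a + b) (by exact_mod_cast hrn : (0 : ℝ) < (r * n : ℕ))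
    (by push_cast; nlinarith) (by push_cast; nlinarith) hr
  rw [walkSum_append hpcr, walkSum_append hcr0, walkSum_comp_mod hc, nsmul_eq_mul]
  push_cast at key ⊢
  linarith

lemma StrictMono.exists_le_lt_succ {c : ℕ → ℕ} (hc : StrictMono c) {l₀ n : ℕ} (h : c l₀ ≤ n) :
    ∃ l, l₀ ≤ l ∧ c l ≤ n ∧ n < c (l + 1) := by
  classical
  have hex : ∃ j, n < c j := ⟨n + 1, hc.id_le (n + 1)⟩
  have hlt : l₀ < Nat.find hex := hc.lt_iff_lt.1 (h.trans_lt (Nat.find_spec hex))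
  refine ⟨Nat.find hex - 1, by omega, not_lt.1 (Nat.find_min hex (by omega)), ?_⟩
  rw [Nat.sub_add_cancel (by omega)]
  exact Nat.find_spec hex

lemma StrictMono.eq_of_le_lt_succ {c : ℕ → ℕ} (hc : StrictMono c) {l l' n : ℕ}
    (hl : c l ≤ n) (hl' : n < c (l + 1)) (hm : c l' ≤ n) (hm' : n < c (l' + 1)) : l = l' := by
  have h1 := hc.lt_iff_lt.1 (hl.trans_lt hm')
  have h2 := hc.lt_iff_lt.1 (hm.trans_lt hl')
  omega

lemma le_liminf_avg_of_lower_bound {x : ℕ → ℝ} {τ B : ℝ} (hx : ∀ m, x m ≤ B)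
    (h : ∀ ε > 0, ∃ K, ∀ᶠ n in atTop, (τ - ε) * n - K ≤ ∑ m ∈ range n, x m) :
    τ ≤ liminf (fun n : ℕ => (∑ m ∈ range n, x m) / n) atTop := by
  have hbdd : ∀ n : ℕ, (∑ m ∈ range n, x m) / n ≤ max B 0 := by
    intro n
    rcases Nat.eq_zero_or_pos n with rfl | hn
    · simp
    rw [div_le_iff₀ (by positivity)]
    calc ∑ m ∈ range n, x m ≤ n * B := by
          simpa using sum_le_card_nsmul (range n) x B fun m _ => hx m
      _ ≤ max B 0 * n := by rw [mul_comm]; gcongr; exact le_max_left _ _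
  refine le_of_forall_pos_le_add fun ε hε => sub_le_iff_le_add.1 ?_
  obtain ⟨K, hK⟩ := h (ε / 2) (by positivity)
  refine le_liminf_of_le (isCoboundedUnder_ge_of_le atTop hbdd) ?_
  filter_upwards [hK, eventually_ge_atTop ⌈2 * K / ε⌉₊, eventually_gt_atTop 0]
    with n hn hKn hpos
  have hKn : 2 * K / ε ≤ n := (Nat.le_ceil _).trans (by exact_mod_cast hKn)
  rw [div_le_iff₀ hε] at hKn
  rw [le_div_iff₀ (by positivity)]
  linarith

lemma exists_lower_bound_of_blocks {x : ℕ → ℝ} {c : ℕ → ℕ} {τ B : ℝ} (hx : ∀ m, |x m| ≤ B)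
    (hc : StrictMono c)
    (hblock : ∀ ε > 0, ∀ᶠ l in atTop,
      (τ - ε) * (c (l + 1) - c l : ℝ) ≤ ∑ m ∈ Ico (c l) (c (l + 1)), x m)
    (hgap : (fun l => (c (l + 1) - c l : ℝ)) =o[atTop] (fun l => (c l : ℝ))) :
    ∀ ε > 0, ∃ K, ∀ᶠ n in atTop, (τ - ε) * n - K ≤ ∑ m ∈ range n, x m := by
  intro ε hε
  have hB : 0 ≤ B := (abs_nonneg _).trans (hx 0)
  set δ := ε / (1 + B + |τ|)
  have hδ : 0 < δ := by positivity
  have hεδ : ε = (1 + B + |τ|) * δ := by simp only [δ]; field_simp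
  obtain ⟨l₀, hl₀⟩ := eventually_atTop.1 ((hblock δ hδ).and (hgap.def hδ))
  set S := fun n => ∑ m ∈ range n, x m
  have hS : ∀ {a b}, a ≤ b → S b = S a + ∑ m ∈ Ico a b, x m := fun hab =>
    (sum_range_add_sum_Ico x hab).symm
  have htel : ∀ l ≥ l₀, (τ - δ) * (c l - c l₀ : ℝ) ≤ S (c l) - S (c l₀) := by
    intro l hl
    induction l, hl using Nat.le_induction with
    | base => simp
    | succ l hl ih =>
      rw [hS (hc.monotone l.le_succ)]
      linarith [(hl₀ l hl).1]
  refine ⟨(τ - δ) * c l₀ - S (c l₀), ?_⟩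
  filter_upwards [eventually_ge_atTop (c l₀)] with n hn
  obtain ⟨l, hl, hln, hnl⟩ := hc.exists_le_lt_succ hn
  have hcl : (c l : ℝ) ≤ n := by exact_mod_cast hln
  have hrest : -(B * (n - c l : ℝ)) ≤ ∑ m ∈ Ico (c l) n, x m := by
    have := card_nsmul_le_sum (Ico (c l) n) x (-B) fun m _ => neg_le_of_abs_le (hx m)
    rw [Nat.card_Ico, nsmul_eq_mul, Nat.cast_sub hln] at this
    linarith
  have hgap_l : (n - c l : ℝ) ≤ δ * n := by
    have h1 : (n : ℝ) < c (l + 1) := by exact_mod_cast hnl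
    have h2 := (le_abs_self _).trans ((hl₀ l hl).2)
    rw [Real.norm_natCast] at h2
    nlinarith
  have hloss : (τ - δ + B) * (n - c l) ≤ (B + |τ|) * (δ * n) :=
    calc (τ - δ + B) * (n - c l) ≤ (B + |τ|) * (n - c l) :=
          mul_le_mul_of_nonneg_right (by linarith [le_abs_self τ]) (by linarith)
      _ ≤ (B + |τ|) * (δ * n) := by gcongr
  have hε_n : ε * n = δ * n + (B + |τ|) * (δ * n) := by rw [hεδ]; ring
  show _ ≤ S n
  rw [hS hln]
  nlinarith [htel l hl]

lemma exists_tendsto_atTop_isLittleO (n : ℕ → ℕ) :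
    ∃ J : ℕ → ℕ, Tendsto J atTop atTop ∧
      (fun l => (n (J l) : ℝ)) =o[atTop] (fun l => (l : ℝ)) := by
  classical
  set J := fun l => Nat.findGreatest (fun j => j * n j ≤ l) l
  have hJn : ∀ l, J l * n (J l) ≤ l := fun l =>
    Nat.findGreatest_spec (P := fun j => j * n j ≤ l) (Nat.zero_le l) (by simp)
  have hJ : Tendsto J atTop atTop := tendsto_atTop_atTop.2 fun j =>
    ⟨j + j * n j, fun l hl => Nat.le_findGreatest (by omega) (by omega)⟩
  refine ⟨J, hJ, IsLittleO.of_bound fun ε hε => ?_⟩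
  filter_upwards [hJ.eventually_ge_atTop ⌈1 / ε⌉₊] with l hl
  have hJl : (J l * n (J l) : ℝ) ≤ l := by exact_mod_cast hJn l
  have hεJ : 1 ≤ ε * J l := by
    rw [← div_le_iff₀' hε]; exact (Nat.le_ceil _).trans (by exact_mod_cast hl)
  simp only [Real.norm_natCast]
  nlinarith

def blockStart (len : ℕ → ℕ) (l : ℕ) : ℕ := ∑ u ∈ range l, len u

def IsConcat {V : Type*} (len : ℕ → ℕ) (q : ℕ → ℕ → V) (P : ℕ → V) : Prop :=
  ∀ l, ∀ m ≤ len l, P (blockStart len l + m) = q l m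

section Concat

variable {V M : Type*} [AddCommMonoid M] {len : ℕ → ℕ} {q : ℕ → ℕ → V} {P : ℕ → V}

lemma blockStart_succ (len : ℕ → ℕ) (l : ℕ) :
    blockStart len (l + 1) = blockStart len l + len l :=
  sum_range_succ _ _

lemma strictMono_blockStart (hlen : ∀ l, 0 < len l) : StrictMono (blockStart len) :=
  strictMono_nat_of_lt_succ fun l => by simp [blockStart_succ, hlen l]

lemma exists_isConcat (hlen : ∀ l, 0 < len l) (hq : ∀ l, q l (len l) = q (l + 1) 0) :
    ∃ P, IsConcat len q P := by
  have hc := strictMono_blockStart hlen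
  choose β hβ using fun n => hc.exists_le_lt_succ (l₀ := 0) (n := n) (by simp [blockStart])
  have hβ_eq : ∀ l m, m < len l → β (blockStart len l + m) = l := fun l m hm =>
    hc.eq_of_le_lt_succ (hβ _).2.1 (hβ _).2.2 (by omega) (by rw [blockStart_succ]; omega)
  refine ⟨fun n => q (β n) (n - blockStart len (β n)), fun l m hm => ?_⟩
  rcases hm.lt_or_eq with hm | rfl
  · simp only [hβ_eq l m hm, Nat.add_sub_cancel_left]
  · have : blockStart len l + len l = blockStart len (l + 1) + 0 := by
      rw [blockStart_succ, add_zero]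
    simp only [this, hβ_eq (l + 1) 0 (hlen _), Nat.add_sub_cancel_left, hq]

lemma IsConcat.sum_Ico_eq_walkSum (hP : IsConcat len q P) (f : V → V → M) (l : ℕ) :
    ∑ m ∈ Ico (blockStart len l) (blockStart len (l + 1)), f (P m) (P (m + 1)) =
      walkSum f (len l) (q l) := by
  rw [sum_Ico_eq_sum_range, blockStart_succ, Nat.add_sub_cancel_left, walkSum]
  refine sum_congr rfl fun m hm => ?_
  rw [hP l m (mem_range.1 hm).le, add_assoc, hP l (m + 1) (mem_range.1 hm)]

lemma IsConcat.isWalk {E : V → V → Prop} (hP : IsConcat len q P) (hlen : ∀ l, 0 < len l)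
    (hq : ∀ l, IsWalk E (len l) (q l)) (m : ℕ) : E (P m) (P (m + 1)) := by
  obtain ⟨l, -, hlm, hml⟩ :=
    (strictMono_blockStart hlen).exists_le_lt_succ (l₀ := 0) (n := m) (by simp [blockStart])
  obtain ⟨j, rfl⟩ := Nat.exists_eq_add_of_le hlm
  rw [blockStart_succ] at hml
  rw [hP l j (by omega), add_assoc, hP l (j + 1) (by omega)]
  exact hq l j (by omega)

lemma IsConcat.le_liminf_avg {f : V → V → ℝ} {B τ : ℝ} (hP : IsConcat len q P)
    (hf : ∀ u v, |f u v| ≤ B) (hlen : ∀ l, 0 < len l) {γ : ℕ → ℝ}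
    (hγ : Tendsto γ atTop (𝓝 0)) (hq : ∀ l, (τ - γ l) * len l ≤ walkSum f (len l) (q l))
    (hshort : (fun l => (len l : ℝ)) =o[atTop] (fun l => (l : ℝ))) :
    τ ≤ liminf (fun n : ℕ => (∑ m ∈ range n, f (P m) (P (m + 1))) / n) atTop := by
  have hc := strictMono_blockStart hlen
  refine le_liminf_avg_of_lower_bound (B := B) (fun m => le_of_abs_le (hf _ _)) ?_
  refine exists_lower_bound_of_blocks (fun m => hf _ _) hc (fun ε hε => ?_) ?_
  · filter_upwards [(tendsto_order.1 hγ).2 ε hε] with l hl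
    rw [hP.sum_Ico_eq_walkSum, blockStart_succ, Nat.cast_add, add_sub_cancel_left]
    exact (mul_le_mul_of_nonneg_right (sub_le_sub_left hl.le _) (Nat.cast_nonneg _)).trans (hq l)
  · simp only [blockStart_succ, Nat.cast_add, add_sub_cancel_left]
    refine hshort.trans_isBigO (IsBigO.of_bound' (Eventually.of_forall fun l => ?_))
    simpa using hc.id_le l

end Concat

/-- In a finite strongly connected directed graph with `ℝ^k` edge weights,
if for every `α > 0` there is a cyclic path with average weight at least `t i - α` in every
dimension, then there is an infinite path with mean-payoff vector at least `t`. -/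
theorem stmt0 {V : Type*} [Fintype V] {k : ℕ}
    (E : V → V → Prop) (w : V → V → Fin k → ℝ) (t : Fin k → ℝ)
    (hconn : ∀ u v : V, ∃ (n : ℕ) (p : ℕ → V), p 0 = u ∧ p n = v ∧
      ∀ m < n, E (p m) (p (m + 1)))
    (hcyc : ∀ α : ℝ, 0 < α → ∃ (n : ℕ) (p : ℕ → V), 0 < n ∧ p n = p 0 ∧
      (∀ m < n, E (p m) (p (m + 1))) ∧
      ∀ i : Fin k, t i - α ≤ (∑ m ∈ Finset.range n, w (p m) (p (m + 1)) i) / n) :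
    ∃ p : ℕ → V, (∀ m : ℕ, E (p m) (p (m + 1))) ∧
      ∀ i : Fin k, t i ≤ liminf (fun n : ℕ =>
        (∑ m ∈ Finset.range n, w (p m) (p (m + 1)) i) / n) atTop := by
  obtain ⟨B, hB⟩ : ∃ B, ∀ u v i, |w u v i| ≤ B :=
    let ⟨B, hB⟩ := (Set.finite_range fun x : V × V × Fin k => |w x.1 x.2.1 x.2.2|).bddAbove
    ⟨B, fun u v i => hB ⟨(u, v, i), rfl⟩⟩
  obtain ⟨-, c, -⟩ := hcyc 1 one_pos
  choose n q hn hq0 hqn hqE hqw using fun j : ℕ =>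
    exists_closed_walk_avg_ge hB hconn hcyc (c 0) (Nat.one_div_pos_of_nat (n := j))
  obtain ⟨J, hJ, hshort⟩ := exists_tendsto_atTop_isLittleO n
  obtain ⟨P, hP⟩ := exists_isConcat (len := fun l => n (J l)) (q := fun l => q (J l))
    (fun l => hn _) fun l => (hqn _).trans (hq0 _).symm
  refine ⟨P, hP.isWalk (fun l => hn _) fun l => hqE _, fun i => ?_⟩
  exact hP.le_liminf_avg (f := fun u v => w u v i) (fun u v => hB u v i) (fun l => hn _)
      (tendsto_one_div_add_atTop_nhds_zero_nat.comp hJ) (fun l => hqw _ i) hshort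
end

section
/- Let G = (V_1 ∪ V_2, E, w) be a complete bipartite directed graph with a normalized weight function (all edges leaving V_1 have positive weight, all edges leaving V_2 have negative weight). Define the symmetric weight function w' on the undirected complete bipartite graph by w'(v_1,v_2) = w(v_1,v_2) if w(v_1,v_2) + w(v_2,v_1) ≥ 0 and w'(v_1,v_2) = w(v_2,v_1) otherwise. Then for every memoryless maximizer strategy σ avoiding surely losing edges, and every finite path π consistent with σ, the total weight of π according to w' is at least its total weight according to w. -/
open Finset Sum

/-- In a complete bipartite directed graph with normalized weights, let `w'` be
the symmetrized weight choosing `w1 v₁ v₂` if `w1 v₁ v₂ + w2 v₂ v₁ ≥ 0` and `w2 v₂ v₁`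
otherwise. For every memoryless maximizer strategy `σ` avoiding surely losing edges and
every finite path consistent with `σ`, the total `w'`-weight is at least the total
`w`-weight. -/
theorem stmt4 {V1 V2 : Type*} [Fintype V1] [Fintype V2]
    (w1 : V1 → V2 → ℝ) (w2 : V2 → V1 → ℝ)
    (hnorm1 : ∀ v1 v2, 0 < w1 v1 v2) (hnorm2 : ∀ v2 v1, w2 v2 v1 < 0)
    (w' : V1 → V2 → ℝ)
    (hw' : ∀ v1 v2, w' v1 v2 = if 0 ≤ w1 v1 v2 + w2 v2 v1 then w1 v1 v2 else w2 v2 v1)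
    (σ : V1 → V2)
    (hσ : ∀ v1, 0 ≤ w1 v1 (σ v1) + w2 (σ v1) v1)
    (p : ℕ → V1 ⊕ V2) (n : ℕ)
    (hcons : ∀ m < n, (∀ v : V1, p m = inl v → p (m + 1) = inr (σ v)) ∧
      (∀ u : V2, p m = inr u → ∃ v : V1, p (m + 1) = inl v)) :
    (∑ m ∈ Finset.range n, (match p m, p (m + 1) with
        | inl v, inr u => w1 v u
        | inr u, inl v => w2 u v
        | _, _ => (0 : ℝ))) ≤
    (∑ m ∈ Finset.range n, (match p m, p (m + 1) with
        | inl v, inr u => w' v u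
        | inr u, inl v => w' v u
        | _, _ => (0 : ℝ))) := by
  apply Finset.sum_le_sum
  intro m hm
  rw [Finset.mem_range] at hm
  obtain ⟨h1, h2⟩ := hcons m hm
  cases hpm : p m with
  | inl v =>
    rw [h1 v hpm]
    show w1 v (σ v) ≤ w' v (σ v)
    rw [hw']
    simp [hσ v]
  | inr u =>
    obtain ⟨v, hv⟩ := h2 u hpm
    rw [hv]
    show w2 u v ≤ w' v u
    rw [hw']
    split
    · exact le_of_lt (lt_of_lt_of_le (hnorm2 u v) (le_of_lt (hnorm1 v u)))
    · exact le_refl _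
end

section
/- In the two-player zero-sum alternating move game obtained from a mean-payoff game on a complete bipartite undirected graph (player 1's actions are the minimizer's vertices V_2, player 2's actions are the maximizer's vertices V_1, and u_1(a_1,a_2) = w(a_1,a_2)/W where W bounds all weights), a Nash equilibrium strategy profile induces a pair of optimal strategies in the mean-payoff game, and conversely: the equilibrium utility of player 1 equals 1/W times the value of the mean-payoff game. -/
open Filter Finset

section TwoPlayerAlt

variable {V1 V2 : Type*}

/-- History of rounds of the alternating game: player 1 (choosing vertices of `V2`) moves
first in each round, then player 2 (choosing vertices of `V1`) answers. -/
def hist2 (σ1 : List (V2 × V1) → V2) (σ2 : List (V2 × V1) → V2 → V1) : ℕ → List (V2 × V1)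
  | 0 => []
  | n + 1 =>
    let l := hist2 σ1 σ2 n
    l ++ [(σ1 l, σ2 l (σ1 l))]

/-- Player 1's action in round `m`. -/
def xmove (σ1 : List (V2 × V1) → V2) (σ2 : List (V2 × V1) → V2 → V1) (m : ℕ) : V2 :=
  σ1 (hist2 σ1 σ2 m)

/-- Player 2's action in round `m`. -/
def ymove (σ1 : List (V2 × V1) → V2) (σ2 : List (V2 × V1) → V2 → V1) (m : ℕ) : V1 :=
  σ2 (hist2 σ1 σ2 m) (xmove σ1 σ2 m)

/-- The payoff (for a payoff function `u` on the pair of last actions) accrued at half-round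
`t`: the current vector of last actions (the first half-round has payoff `0`). -/
def stream (u : V2 → V1 → ℝ) (σ1 : List (V2 × V1) → V2) (σ2 : List (V2 × V1) → V2 → V1)
    (t : ℕ) : ℝ :=
  if t = 0 then 0
  else if t % 2 = 1 then u (xmove σ1 σ2 (t / 2)) (ymove σ1 σ2 (t / 2))
  else u (xmove σ1 σ2 (t / 2)) (ymove σ1 σ2 (t / 2 - 1))

/-- The long-run (liminf of average) payoff of the play induced by `(σ1, σ2)`. -/
noncomputable def val (u : V2 → V1 → ℝ) (σ1 : List (V2 × V1) → V2)
    (σ2 : List (V2 × V1) → V2 → V1) : ℝ :=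
  liminf (fun n : ℕ => (∑ t ∈ Finset.range n, stream u σ1 σ2 t) / n) atTop

end TwoPlayerAlt

lemma stream_div_const {V1 V2 : Type*} (u : V2 → V1 → ℝ) (W : ℝ)
    (σ1 : List (V2 × V1) → V2) (σ2 : List (V2 × V1) → V2 → V1) (t : ℕ) :
    stream (fun a b => u a b / W) σ1 σ2 t = stream u σ1 σ2 t / W := by
  unfold stream
  split_ifs <;> simp

lemma val_div_const {V1 V2 : Type*} [Fintype V1] [Fintype V2] [Nonempty V1] [Nonempty V2]
    (u : V2 → V1 → ℝ) (W : ℝ) (hW : 0 < W)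
    (σ1 : List (V2 × V1) → V2) (σ2 : List (V2 × V1) → V2 → V1) :
    val (fun a b => u a b / W) σ1 σ2 = val u σ1 σ2 / W := by
  set M : ℝ := Finset.univ.sup' (by simp) (fun p : V2 × V1 => |u p.1 p.2|) with hMdef
  have hM : ∀ a b, |u a b| ≤ M := fun a b =>
    Finset.le_sup' (fun p : V2 × V1 => |u p.1 p.2|) (Finset.mem_univ (a, b))
  have hM0 : 0 ≤ M := le_trans (abs_nonneg _) (hM Classical.ofNonempty Classical.ofNonempty)
  set S : ℕ → ℝ := fun n => (∑ t ∈ Finset.range n, stream u σ1 σ2 t) / n with hS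
  have hstream : ∀ t, |stream u σ1 σ2 t| ≤ M := by
    intro t
    unfold stream
    split_ifs <;> simp [hM, hM0]
  have hSb : ∀ n, |S n| ≤ M := by
    intro n
    rcases Nat.eq_zero_or_pos n with h | h
    · simp [hS, h, hM0]
    · have h1 : |∑ t ∈ Finset.range n, stream u σ1 σ2 t| ≤ n * M := by
        calc |∑ t ∈ Finset.range n, stream u σ1 σ2 t|
            ≤ ∑ t ∈ Finset.range n, |stream u σ1 σ2 t| := Finset.abs_sum_le_sum_abs _ _
          _ ≤ ∑ _t ∈ Finset.range n, M := Finset.sum_le_sum fun t _ => hstream t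
          _ = n * M := by simp [mul_comm]
      have hn : (0:ℝ) < n := by exact_mod_cast h
      rw [hS, abs_div, abs_of_pos hn, div_le_iff₀ hn]
      simpa [mul_comm] using h1
  have hval' : val (fun a b => u a b / W) σ1 σ2 = liminf (fun n => S n * W⁻¹) atTop := by
    unfold _root_.val
    congr 1
    funext n
    simp only [stream_div_const, hS]
    rw [← Finset.sum_div]
    field_simp
  have hval : val u σ1 σ2 = liminf S atTop := rfl
  have hb1 : IsBoundedUnder (· ≥ ·) atTop S :=
    isBoundedUnder_of ⟨-M, fun n => neg_le_of_abs_le (hSb n)⟩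
  have hb2 : IsBoundedUnder (· ≤ ·) atTop S :=
    isBoundedUnder_of ⟨M, fun n => le_of_abs_le (hSb n)⟩
  have hb1' : IsBoundedUnder (· ≥ ·) atTop (fun n => S n * W⁻¹) :=
    isBoundedUnder_of ⟨-M * W⁻¹, fun n =>
      mul_le_mul_of_nonneg_right (neg_le_of_abs_le (hSb n)) (inv_pos.2 hW).le⟩
  have hb2' : IsBoundedUnder (· ≤ ·) atTop (fun n => S n * W⁻¹) :=
    isBoundedUnder_of ⟨M * W⁻¹, fun n =>
      mul_le_mul_of_nonneg_right (le_of_abs_le (hSb n)) (inv_pos.2 hW).le⟩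
  have key := OrderIso.liminf_apply (f := atTop) (u := S)
    (OrderIso.mulRight₀ W⁻¹ (inv_pos.2 hW)) hb1 hb2.isCoboundedUnder_flip
    hb1' hb2'.isCoboundedUnder_flip
  simp only [OrderIso.mulRight₀_apply] at key
  rw [hval', hval, ← key, div_eq_mul_inv]

/-- consider the mean-payoff game on the complete bipartite undirected graph
with symmetric weights `w` (maximizer owns `V1`, i.e. chooses the `V2`-vertices the pebble
moves to; minimizer owns `V2`), with value `ν` (witnessed by optimal strategies for both
sides), and the associated two-player zero-sum alternating move game where player 1's
actions are `V2`, player 2's actions are `V1`, and player 1's utility function is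
`u₁ a₁ a₂ = w a₂ a₁ / W`.  Then equilibria and pairs of optimal strategies coincide: every
Nash equilibrium of the alternating game gives player 1 utility `ν / W`, and an
equilibrium exists. -/
theorem stmt13 {V1 V2 : Type*} [Fintype V1] [Fintype V2] [Nonempty V1] [Nonempty V2]
    (w : V1 → V2 → ℝ) (W : ℝ) (hW : 0 < W) (hbd : ∀ a b, |w a b| ≤ W)
    (ν : ℝ)
    (hmax : ∃ σ1, ∀ σ2, ν ≤ val (fun a1 a2 => w a2 a1) σ1 σ2)
    (hmin : ∃ σ2, ∀ σ1, val (fun a1 a2 => w a2 a1) σ1 σ2 ≤ ν) :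
    (∀ (σ1 : List (V2 × V1) → V2) (σ2 : List (V2 × V1) → V2 → V1),
      ((∀ τ1, val (fun a1 a2 => w a2 a1 / W) τ1 σ2 ≤ val (fun a1 a2 => w a2 a1 / W) σ1 σ2) ∧
       (∀ τ2, val (fun a1 a2 => w a2 a1 / W) σ1 σ2 ≤ val (fun a1 a2 => w a2 a1 / W) σ1 τ2)) →
      val (fun a1 a2 => w a2 a1 / W) σ1 σ2 = ν / W) ∧
    (∃ (σ1 : List (V2 × V1) → V2) (σ2 : List (V2 × V1) → V2 → V1),
      (∀ τ1, val (fun a1 a2 => w a2 a1 / W) τ1 σ2 ≤ val (fun a1 a2 => w a2 a1 / W) σ1 σ2) ∧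
      (∀ τ2, val (fun a1 a2 => w a2 a1 / W) σ1 σ2 ≤ val (fun a1 a2 => w a2 a1 / W) σ1 τ2)) := by
  obtain ⟨σ1s, hσ1s⟩ := hmax
  obtain ⟨σ2s, hσ2s⟩ := hmin
  have hscale : ∀ σ1 σ2, val (fun a1 a2 => w a2 a1 / W) σ1 σ2
      = val (fun a1 a2 => w a2 a1) σ1 σ2 / W :=
    fun σ1 σ2 => val_div_const (fun a1 a2 => w a2 a1) W hW σ1 σ2
  constructor
  · rintro σ1 σ2 ⟨h1, h2⟩
    have hle : val (fun a1 a2 => w a2 a1 / W) σ1 σ2 ≤ ν / W := by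
      calc val (fun a1 a2 => w a2 a1 / W) σ1 σ2 ≤ val (fun a1 a2 => w a2 a1 / W) σ1 σ2s := h2 σ2s
        _ = val (fun a1 a2 => w a2 a1) σ1 σ2s / W := hscale _ _
        _ ≤ ν / W := div_le_div_of_nonneg_right (hσ2s σ1) hW.le
    have hge : ν / W ≤ val (fun a1 a2 => w a2 a1 / W) σ1 σ2 := by
      calc ν / W ≤ val (fun a1 a2 => w a2 a1) σ1s σ2 / W :=
            div_le_div_of_nonneg_right (hσ1s σ2) hW.le
        _ = val (fun a1 a2 => w a2 a1 / W) σ1s σ2 := (hscale _ _).symm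
        _ ≤ val (fun a1 a2 => w a2 a1 / W) σ1 σ2 := h1 σ1s
    exact le_antisymm hle hge
  · refine ⟨σ1s, σ2s, fun τ1 => ?_, fun τ2 => ?_⟩
    · calc val (fun a1 a2 => w a2 a1 / W) τ1 σ2s
          = val (fun a1 a2 => w a2 a1) τ1 σ2s / W := hscale _ _
        _ ≤ ν / W := div_le_div_of_nonneg_right (hσ2s τ1) hW.le
        _ ≤ val (fun a1 a2 => w a2 a1) σ1s σ2s / W :=
            div_le_div_of_nonneg_right (hσ1s σ2s) hW.le
        _ = val (fun a1 a2 => w a2 a1 / W) σ1s σ2s := (hscale _ _).symm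
    · calc val (fun a1 a2 => w a2 a1 / W) σ1s σ2s
          = val (fun a1 a2 => w a2 a1) σ1s σ2s / W := hscale _ _
        _ ≤ ν / W := div_le_div_of_nonneg_right (hσ2s σ1s) hW.le
        _ ≤ val (fun a1 a2 => w a2 a1) σ1s τ2 / W :=
            div_le_div_of_nonneg_right (hσ1s τ2) hW.le
        _ = val (fun a1 a2 => w a2 a1 / W) σ1s τ2 := (hscale _ _).symm
end

section
/- Let G be a finite directed graph with k-dimensional edge weights bounded by W, and suppose for each i ∈ ℕ there is a cyclic path C_{1/i} through vertex v_{1/i} of length L_i with average weight at least t_j − 1/i in every dimension j. Fix connecting paths π_{u,v} of length at most |V| between any two vertices. Define the infinite path ρ that, for i = 1, 2, 3, ..., follows π from the previous cycle's base vertex to v_{1/i} and then traverses C_{1/i} exactly m_i = i·W·L_{i+1} times. Then the mean-payoff vector of ρ is at least (t_1,...,t_k). -/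
open Filter Finset

set_option maxHeartbeats 2000000 in
/-- the explicit construction in the sufficiency lemma.  In a finite graph with
`k`-dimensional weights bounded by `W`, suppose for every `i ≥ 1` there is a cyclic path
`C i` of length `L i` with average weight at least `t j - 1/i` in every dimension `j`.
The infinite path `ρ` follows, for `i = 1, 2, …`, a connecting path of length `p i ≤ |V|`
to the base vertex of `C i` and then traverses `C i` exactly `m i = i·W·L (i+1)` times
(block `i` starts at time `S (i-1)` where `S` accumulates block lengths).  Then the
mean-payoff vector of `ρ` is at least `t`. -/
theorem stmt16 {V : Type*} [Fintype V] {k : ℕ}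
    (E : V → V → Prop) (w : V → V → Fin k → ℝ) (W : ℕ) (t : Fin k → ℝ)
    (hbd : ∀ u v j, |w u v j| ≤ (W : ℝ))
    (L : ℕ → ℕ) (hL : ∀ i : ℕ, 1 ≤ i → 0 < L i)
    (C : ℕ → ℕ → V)
    (hCcyc : ∀ i : ℕ, 1 ≤ i → C i (L i) = C i 0)
    (hCedge : ∀ i : ℕ, 1 ≤ i → ∀ a < L i, E (C i a) (C i (a + 1)))
    (hCavg : ∀ i : ℕ, 1 ≤ i → ∀ j : Fin k,
      t j - 1 / (i : ℝ) ≤ (∑ a ∈ Finset.range (L i), w (C i a) (C i (a + 1)) j) / (L i))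
    (p : ℕ → ℕ) (hp : ∀ i : ℕ, 1 ≤ i → p i ≤ Fintype.card V)
    (S : ℕ → ℕ) (hS0 : S 0 = 0)
    (hS : ∀ i : ℕ, S (i + 1) = S i + p (i + 1) + ((i + 1) * W * L (i + 2)) * L (i + 1))
    (ρ : ℕ → V)
    (hedge : ∀ n : ℕ, E (ρ n) (ρ (n + 1)))
    (hblock : ∀ i : ℕ, 1 ≤ i → ∀ r < (i * W * L (i + 1)) * L i,
      ρ (S (i - 1) + p i + r) = C i (r % L i)) :
    ∀ j : Fin k, t j ≤ liminf (fun n : ℕ =>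
      (∑ m ∈ Finset.range n, w (ρ m) (ρ (m + 1)) j) / n) atTop := by
  intro j
  set f : ℕ → ℝ := fun m => w (ρ m) (ρ (m + 1)) j with hf
  have hfW : ∀ m, -(W : ℝ) ≤ f m := fun m => neg_le_of_abs_le (hbd _ _ j)
  have hfW' : ∀ m, f m ≤ (W : ℝ) := fun m => le_of_abs_le (hbd _ _ j)
  -- averages are bounded above by W
  have havg_ub : ∀ n : ℕ, (∑ m ∈ range n, f m) / n ≤ (W : ℝ) := by
    intro n
    rcases Nat.eq_zero_or_pos n with h | h
    · simp [h]
    · rw [div_le_iff₀ (by exact_mod_cast h)]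
      calc ∑ m ∈ range n, f m ≤ ∑ m ∈ range n, (W : ℝ) :=
            Finset.sum_le_sum fun m _ => hfW' m
        _ = (W : ℝ) * n := by simp [mul_comm]
  have hcobdd : IsCoboundedUnder (· ≥ ·) atTop (fun n : ℕ => (∑ m ∈ range n, f m) / n) :=
    (isBoundedUnder_of ⟨(W : ℝ), fun n => havg_ub n⟩).isCoboundedUnder_ge
  -- trivial case W = 0
  rcases Nat.eq_zero_or_pos W with hW0 | hW
  · have hf0 : ∀ m, f m = 0 := by
      intro m
      have := hbd (ρ m) (ρ (m + 1)) j
      rw [hW0] at this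
      have : |f m| ≤ 0 := by simpa using this
      simpa [abs_nonpos_iff] using this
    have hfun : (fun n : ℕ => (∑ m ∈ range n, f m) / n) = fun _ : ℕ => (0 : ℝ) := by
      funext n; simp [Finset.sum_eq_zero fun m _ => hf0 m]
    rw [hfun, liminf_const]
    by_contra h
    push_neg at h
    obtain ⟨i, hi⟩ := exists_nat_one_div_lt h
    have h1 := hCavg (i + 1) (by omega) j
    have hz : ∀ a ∈ range (L (i + 1)), w (C (i + 1) a) (C (i + 1) (a + 1)) j = 0 := by
      intro a _
      have := hbd (C (i + 1) a) (C (i + 1) (a + 1)) j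
      rw [hW0] at this
      have : |w (C (i + 1) a) (C (i + 1) (a + 1)) j| ≤ 0 := by simpa using this
      simpa [abs_nonpos_iff] using this
    rw [Finset.sum_eq_zero hz] at h1
    simp only [zero_div] at h1
    push_cast at h1
    linarith
  -- main case W ≥ 1
  have hW1 : 1 ≤ W := hW
  -- block lengths
  set bl : ℕ → ℕ := fun q => p q + (q * W * L (q + 1)) * L q with hbl
  have hSstep : ∀ i, S (i + 1) = S i + bl (i + 1) := by
    intro i
    have e : i + 1 + 1 = i + 2 := by omega
    rw [hS i]; simp only [hbl, e]; omega
  have hblpos : ∀ q, 1 ≤ q → 1 ≤ bl q := by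
    intro q hq
    have h1 : 0 < q * W * L (q + 1) * L q :=
      Nat.mul_pos (Nat.mul_pos (Nat.mul_pos hq hW) (hL _ (by omega))) (hL _ hq)
    simp only [hbl]; omega
  have hSmono : Monotone S := monotone_nat_of_le_succ fun i => by rw [hSstep]; omega
  have hSge : ∀ i, i ≤ S i := by
    intro i
    induction i with
    | zero => omega
    | succ i ih =>
      have := hblpos (i + 1) (by omega)
      rw [hSstep]; omega
  have hSsq : ∀ i, i * i ≤ 2 * S i := by
    intro i
    induction i with
    | zero => simp
    | succ i ih =>
      have hb : i + 1 ≤ bl (i + 1) := by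
        have h1 : (i + 1) * 1 * 1 * 1 ≤ (i + 1) * W * L (i + 2) * L (i + 1) :=
          Nat.mul_le_mul (Nat.mul_le_mul (Nat.mul_le_mul le_rfl hW1) (hL _ (by omega)))
            (hL _ (by omega))
        have e : i + 1 + 1 = i + 2 := by omega
        simp only [hbl, e]; omega
      rw [hSstep]
      nlinarith
  -- telescoping sums of block lengths
  have hStel : ∀ i, (∑ q ∈ Icc 1 i, (bl q : ℝ)) = (S i : ℝ) := by
    intro i
    induction i with
    | zero => simp [hS0]
    | succ i ih =>
      rw [Finset.sum_Icc_succ_top (by omega), ih, hSstep]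
      push_cast; ring
  -- the constant T
  obtain ⟨T, hT⟩ : ∃ T : ℝ, T = |t j| + 1 + (W : ℝ) := ⟨_, rfl⟩
  have hT1 : (1 : ℝ) ≤ T := by
    have h0 : (0 : ℝ) ≤ (W : ℝ) := Nat.cast_nonneg W
    simp only [hT]; linarith [abs_nonneg (t j)]
  have hT0 : (0 : ℝ) < T := lt_of_lt_of_le one_pos hT1
  -- key small helper
  have hkey : ∀ x y : ℝ, 0 ≤ x → x ≤ y → ∀ q : ℕ, 1 ≤ q →
      x * (t j - 1 / q + W) ≤ y * T := by
    intro x y hx hxy q hq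
    have hq1 : (1 : ℝ) ≤ q := by exact_mod_cast hq
    have h1 : (0 : ℝ) ≤ 1 / (q : ℝ) := by positivity
    have harg : t j - 1 / q + W ≤ T := by
      simp only [hT]; linarith [le_abs_self (t j)]
    rcases le_or_gt 0 (t j - 1 / q + (W : ℝ)) with h | h
    · exact mul_le_mul hxy harg h (le_trans hx hxy)
    · calc x * (t j - 1 / q + W) ≤ 0 := mul_nonpos_of_nonneg_of_nonpos hx h.le
        _ ≤ y * T := mul_nonneg (le_trans hx hxy) hT0.le
  -- cycle average in product form
  have hσ : ∀ q, 1 ≤ q →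
      (L q : ℝ) * (t j - 1 / q) ≤ ∑ a ∈ range (L q), w (C q a) (C q (a + 1)) j := by
    intro q hq
    have hLq : (0 : ℝ) < L q := by exact_mod_cast hL q hq
    have h := hCavg q hq j
    rw [le_div_iff₀ hLq] at h
    linarith
  -- a single full cycle inside block q
  have hcyc : ∀ q, 1 ≤ q → ∀ c, (c + 1) * L q < (q * W * L (q + 1)) * L q →
      ∑ a ∈ range (L q), f (S (q - 1) + p q + (c * L q + a))
        = ∑ a ∈ range (L q), w (C q a) (C q (a + 1)) j := by
    intro q hq c hc
    refine Finset.sum_congr rfl fun a ha => ?_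
    rw [mem_range] at ha
    have hlt1 : c * L q + a < (q * W * L (q + 1)) * L q := by
      have : c * L q + a < (c + 1) * L q := by rw [add_mul, one_mul]; omega
      omega
    have hlt2 : c * L q + (a + 1) < (q * W * L (q + 1)) * L q := by
      have : c * L q + (a + 1) ≤ (c + 1) * L q := by rw [add_mul, one_mul]; omega
      omega
    have h1 : ρ (S (q - 1) + p q + (c * L q + a)) = C q a := by
      rw [hblock q hq _ hlt1, mul_comm, Nat.mul_add_mod, Nat.mod_eq_of_lt ha]
    have h2 : ρ (S (q - 1) + p q + (c * L q + a) + 1) = C q (a + 1) := by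
      have e : S (q - 1) + p q + (c * L q + a) + 1 = S (q - 1) + p q + (c * L q + (a + 1)) := by
        omega
      rw [e, hblock q hq _ hlt2]
      rcases Nat.lt_or_ge (a + 1) (L q) with h | h
      · rw [mul_comm, Nat.mul_add_mod, Nat.mod_eq_of_lt h]
      · have haL : a + 1 = L q := by omega
        rw [haL]
        have e2 : c * L q + L q = L q * (c + 1) := by ring
        rw [e2, Nat.mul_mod_right]
        exact (hCcyc q hq).symm
    simp only [hf]
    rw [h1, h2]
  -- several consecutive full cycles
  have hfull : ∀ q, 1 ≤ q → ∀ c, c < q * W * L (q + 1) →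
      ∑ x ∈ range (c * L q), f (S (q - 1) + p q + x)
        = (c : ℝ) * ∑ a ∈ range (L q), w (C q a) (C q (a + 1)) j := by
    intro q hq c
    induction c with
    | zero => simp
    | succ c ih =>
      intro hc
      have hc' : c < q * W * L (q + 1) := by omega
      have e : (c + 1) * L q = c * L q + L q := by ring
      rw [e, Finset.sum_range_add, ih hc']
      have hcyc' := hcyc q hq c (by
        have : c + 1 < q * W * L (q + 1) → (c + 1) * L q < (q * W * L (q + 1)) * L q :=
          fun h => Nat.mul_lt_mul_of_lt_of_le h le_rfl (hL q hq)
        exact this hc)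
      have : ∑ x ∈ range (L q), f (S (q - 1) + p q + (c * L q + x))
          = ∑ a ∈ range (L q), w (C q a) (C q (a + 1)) j := hcyc'
      rw [this]
      push_cast; ring
  -- lower bound for a partial run of cycles in block q
  have hA : ∀ q, 1 ≤ q → ∀ r, r ≤ (q * W * L (q + 1)) * L q →
      (r : ℝ) * (t j - 1 / q) - T * (L q : ℝ) ≤
        ∑ x ∈ range r, f (S (q - 1) + p q + x) := by
    intro q hq r hr
    have hLq := hL q hq
    have hM : 1 ≤ q * W * L (q + 1) :=
      Nat.mul_pos (Nat.mul_pos hq hW) (hL _ (by omega))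
    set M := q * W * L (q + 1) with hMdef
    set c := min (r / L q) (M - 1) with hcdef
    have hc1 : c * L q ≤ r :=
      le_trans (Nat.mul_le_mul_right _ (min_le_left _ _)) (Nat.div_mul_le_self r (L q))
    have hc2 : r ≤ c * L q + L q := by
      rcases le_total (r / L q) (M - 1) with h | h
      · rw [hcdef, min_eq_left h]
        have h1 : L q * (r / L q) + r % L q = r := Nat.div_add_mod r (L q)
        have h2 : r % L q < L q := Nat.mod_lt r hLq
        rw [mul_comm]
        omega
      · rw [hcdef, min_eq_right h]
        have e : (M - 1) * L q + L q = M * L q := by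
          have e2 : M - 1 + 1 = M := by omega
          calc (M - 1) * L q + L q = (M - 1 + 1) * L q := by ring
            _ = M * L q := by rw [e2]
        omega
    have hcM : c < M := by
      have := min_le_right (r / L q) (M - 1)
      omega
    -- split the sum
    have hsplit : ∑ x ∈ range r, f (S (q - 1) + p q + x)
        = ∑ x ∈ range (c * L q), f (S (q - 1) + p q + x)
          + ∑ x ∈ range (r - c * L q), f (S (q - 1) + p q + (c * L q + x)) := by
      conv_lhs => rw [← Nat.add_sub_cancel' hc1]
      rw [Finset.sum_range_add]
    have h1 := hfull q hq c hcM
    have h2 : (-(W : ℝ)) * ((r - c * L q : ℕ) : ℝ)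
        ≤ ∑ x ∈ range (r - c * L q), f (S (q - 1) + p q + (c * L q + x)) := by
      have := Finset.card_nsmul_le_sum (range (r - c * L q))
        (fun x => f (S (q - 1) + p q + (c * L q + x))) (-(W : ℝ)) (fun x _ => hfW _)
      simpa [Finset.card_range, nsmul_eq_mul, mul_comm] using this
    have hσq := hσ q hq
    have h3 : (c : ℝ) * ((L q : ℝ) * (t j - 1 / q)) ≤
        (c : ℝ) * ∑ a ∈ range (L q), w (C q a) (C q (a + 1)) j :=
      mul_le_mul_of_nonneg_left hσq (by positivity)
    set x : ℝ := ((r - c * L q : ℕ) : ℝ) with hxdef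
    have hx0 : (0 : ℝ) ≤ x := by simp [hxdef]
    have hxL : x ≤ (L q : ℝ) := by
      rw [hxdef]
      have : r - c * L q ≤ L q := by omega
      exact_mod_cast this
    have hxr : (c : ℝ) * (L q : ℝ) + x = (r : ℝ) := by
      rw [hxdef]
      push_cast [hc1]
      ring
    have hk := hkey x (L q : ℝ) hx0 hxL q hq
    have hexp : x * (t j - 1 / q + W) = x * (t j - 1 / q) + W * x := by ring
    have hexp2 : (r : ℝ) * (t j - 1 / q)
        = (c : ℝ) * (L q : ℝ) * (t j - 1 / q) + x * (t j - 1 / q) := by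
      rw [← hxr]; ring
    rw [hsplit]
    nlinarith [h1, h2, h3]
  -- lower bound for a partial block (connector + cycles)
  have hB : ∀ q, 1 ≤ q → ∀ s, s ≤ bl q →
      (s : ℝ) * (t j - 1 / q) - T * ((L q : ℝ) + (p q : ℝ)) ≤
        ∑ x ∈ range s, f (S (q - 1) + x) := by
    intro q hq s hs
    rcases le_or_gt s (p q) with h | h
    · have h2 : (-(W : ℝ)) * (s : ℝ) ≤ ∑ x ∈ range s, f (S (q - 1) + x) := by
        have := Finset.card_nsmul_le_sum (range s)
          (fun x => f (S (q - 1) + x)) (-(W : ℝ)) (fun x _ => hfW _)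
        simpa [Finset.card_range, nsmul_eq_mul, mul_comm] using this
      have hsp : (s : ℝ) ≤ (p q : ℝ) := by exact_mod_cast h
      have hk := hkey (s : ℝ) (p q : ℝ) (by positivity) hsp q hq
      have hexp : (s : ℝ) * (t j - 1 / q + W) = (s : ℝ) * (t j - 1 / q) + W * s := by ring
      have hTL : (0 : ℝ) ≤ T * (L q : ℝ) := by positivity
      nlinarith [h2]
    · have hps : p q ≤ s := h.le
      have hsplit : ∑ x ∈ range s, f (S (q - 1) + x)
          = ∑ x ∈ range (p q), f (S (q - 1) + x)
            + ∑ x ∈ range (s - p q), f (S (q - 1) + (p q + x)) := by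
        conv_lhs => rw [← Nat.add_sub_cancel' hps]
        rw [Finset.sum_range_add]
      have h2 : (-(W : ℝ)) * ((p q : ℕ) : ℝ) ≤ ∑ x ∈ range (p q), f (S (q - 1) + x) := by
        have := Finset.card_nsmul_le_sum (range (p q))
          (fun x => f (S (q - 1) + x)) (-(W : ℝ)) (fun x _ => hfW _)
        simpa [Finset.card_range, nsmul_eq_mul, mul_comm] using this
      have hr : s - p q ≤ (q * W * L (q + 1)) * L q := by
        have : s ≤ p q + (q * W * L (q + 1)) * L q := by simpa [hbl] using hs
        omega
      have h3 := hA q hq (s - p q) hr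
      have e3 : ∑ x ∈ range (s - p q), f (S (q - 1) + (p q + x))
          = ∑ x ∈ range (s - p q), f (S (q - 1) + p q + x) := by
        refine Finset.sum_congr rfl fun a _ => ?_
        rw [← add_assoc]
      have hcast : ((s - p q : ℕ) : ℝ) = (s : ℝ) - (p q : ℝ) := by push_cast [hps]; ring
      rw [hsplit, e3]
      rw [hcast] at h3
      have hk := hkey (p q : ℝ) (p q : ℝ) (by positivity) le_rfl q hq
      have hexp : (p q : ℝ) * (t j - 1 / q + W)
          = (p q : ℝ) * (t j - 1 / q) + W * p q := by ring
      nlinarith [h2, h3]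
  -- main induction: deficit bound up to S i
  have hMain : ∀ i, ∀ n, n ≤ S i →
      (n : ℝ) * t j - (∑ q ∈ Icc 1 i, ((bl q : ℝ) / q + T * ((L q : ℝ) + (p q : ℝ))))
        ≤ ∑ m ∈ range n, f m := by
    intro i
    induction i with
    | zero =>
      intro n hn
      have : n = 0 := by omega
      simp [this]
    | succ i ih =>
      intro n hn
      have hterm : (0 : ℝ) ≤ (bl (i + 1) : ℝ) / (i + 1 : ℕ)
          + T * ((L (i + 1) : ℝ) + (p (i + 1) : ℝ)) :=
        add_nonneg (div_nonneg (Nat.cast_nonneg _) (Nat.cast_nonneg _))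
          (mul_nonneg hT0.le (add_nonneg (Nat.cast_nonneg _) (Nat.cast_nonneg _)))
      have hDstep : (∑ q ∈ Icc 1 (i + 1), ((bl q : ℝ) / q + T * ((L q : ℝ) + (p q : ℝ))))
          = (∑ q ∈ Icc 1 i, ((bl q : ℝ) / q + T * ((L q : ℝ) + (p q : ℝ))))
            + ((bl (i + 1) : ℝ) / (i + 1 : ℕ) + T * ((L (i + 1) : ℝ) + (p (i + 1) : ℝ))) :=
        Finset.sum_Icc_succ_top (by omega) _
      rcases le_or_gt n (S i) with h | h
      · refine le_trans ?_ (ih n h)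
        rw [hDstep]
        linarith
      · have hSi : S i ≤ n := h.le
        have hsb : n - S i ≤ bl (i + 1) := by
          have := hSstep i
          omega
        have hsplit : ∑ m ∈ range n, f m
            = ∑ m ∈ range (S i), f m + ∑ x ∈ range (n - S i), f (S i + x) := by
          conv_lhs => rw [← Nat.add_sub_cancel' hSi]
          rw [Finset.sum_range_add]
        have h1 := ih (S i) le_rfl
        have h2 : ((n - S i : ℕ) : ℝ) * (t j - 1 / ((i + 1 : ℕ) : ℝ))
            - T * ((L (i + 1) : ℝ) + (p (i + 1) : ℝ))
            ≤ ∑ x ∈ range (n - S i), f (S i + x) := by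
          have := hB (i + 1) (by omega) (n - S i) hsb
          simpa using this
        have hcast : ((n - S i : ℕ) : ℝ) = (n : ℝ) - (S i : ℝ) := by push_cast [hSi]; ring
        rw [hcast] at h2
        have hip : (0 : ℝ) < ((i + 1 : ℕ) : ℝ) := by positivity
        have hdiv : ((n : ℝ) - (S i : ℝ)) * (1 / ((i + 1 : ℕ) : ℝ))
            ≤ (bl (i + 1) : ℝ) / ((i + 1 : ℕ) : ℝ) := by
          rw [mul_one_div]
          apply div_le_div_of_nonneg_right ?_ hip.le
          · exact_mod_cast hsb
        have hexp : ((n : ℝ) - (S i : ℝ)) * (t j - 1 / ((i + 1 : ℕ) : ℝ))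
            = ((n : ℝ) - (S i : ℝ)) * t j
              - ((n : ℝ) - (S i : ℝ)) * (1 / ((i + 1 : ℕ) : ℝ)) := by ring
        rw [hsplit, hDstep]
        push_cast at hdiv hexp h2 ⊢
        linarith
  -- bound on the weighted block-length sum
  have hDbl : ∀ Q : ℕ, 1 ≤ Q → ∀ i,
      (∑ q ∈ Icc 1 i, (bl q : ℝ) / q) ≤ (S Q : ℝ) + (S i : ℝ) / Q := by
    intro Q hQ i
    have hQ0 : (0 : ℝ) < Q := by exact_mod_cast hQ
    have step1 : ∀ q ∈ Icc 1 i, (bl q : ℝ) / q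
        ≤ (if q ≤ Q then (bl q : ℝ) else 0) + (bl q : ℝ) / Q := by
      intro q hq
      rw [mem_Icc] at hq
      by_cases h : q ≤ Q
      · simp only [if_pos h]
        have h1 : (bl q : ℝ) / q ≤ (bl q : ℝ) :=
          div_le_self (by positivity) (by exact_mod_cast hq.1)
        have h2 : (0 : ℝ) ≤ (bl q : ℝ) / Q := by positivity
        linarith
      · simp only [if_neg h]
        have hq1 : (0 : ℝ) < Q := hQ0
        have : (bl q : ℝ) / q ≤ (bl q : ℝ) / Q := by
          apply div_le_div_of_nonneg_left (by positivity) hq1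
          exact_mod_cast le_of_not_ge h
        linarith
    calc (∑ q ∈ Icc 1 i, (bl q : ℝ) / q)
        ≤ ∑ q ∈ Icc 1 i, ((if q ≤ Q then (bl q : ℝ) else 0) + (bl q : ℝ) / Q) :=
          Finset.sum_le_sum step1
      _ = (∑ q ∈ Icc 1 i, (if q ≤ Q then (bl q : ℝ) else 0))
          + (∑ q ∈ Icc 1 i, (bl q : ℝ)) / Q := by
          rw [Finset.sum_add_distrib, Finset.sum_div]
      _ ≤ (S Q : ℝ) + (S i : ℝ) / Q := by
          have e1 : (∑ q ∈ Icc 1 i, (if q ≤ Q then (bl q : ℝ) else 0))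
              = ∑ q ∈ Icc 1 (min i Q), (bl q : ℝ) := by
            rw [← Finset.sum_filter]
            congr 1
            ext q
            simp only [mem_filter, mem_Icc, le_min_iff]
            omega
          rw [e1, hStel, hStel]
          have h1 : (S (min i Q) : ℝ) ≤ (S Q : ℝ) := by
            exact_mod_cast hSmono (min_le_right i Q)
          linarith
  -- sum of cycle lengths bound
  have hsumL : ∀ i, (∑ q ∈ Icc 1 (i + 1), (L q : ℝ))
      ≤ (L 1 : ℝ) + ∑ q ∈ Icc 1 i, (bl q : ℝ) / q := by
    intro i
    induction i with
    | zero => simp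
    | succ i ih =>
      rw [show i + 1 + 1 = i + 2 by omega]
      have e1 : (∑ q ∈ Icc 1 (i + 2), (L q : ℝ))
          = (∑ q ∈ Icc 1 (i + 1), (L q : ℝ)) + (L (i + 2) : ℝ) :=
        Finset.sum_Icc_succ_top (by omega) _
      have e2 : (∑ q ∈ Icc 1 (i + 1), ((bl q : ℝ) / q))
          = (∑ q ∈ Icc 1 i, ((bl q : ℝ) / q)) + (bl (i + 1) : ℝ) / ((i + 1 : ℕ) : ℝ) :=
        Finset.sum_Icc_succ_top (by omega) _
      rw [e1, e2]
      have hkey2 : (L (i + 2) : ℝ) ≤ (bl (i + 1) : ℝ) / ((i + 1 : ℕ) : ℝ) := by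
        have hnat : (i + 1) * L (i + 2) ≤ bl (i + 1) := by
          have h1 : (i + 1) * 1 * L (i + 2) * 1 ≤ (i + 1) * W * L (i + 2) * L (i + 1) :=
            Nat.mul_le_mul (Nat.mul_le_mul (Nat.mul_le_mul le_rfl hW1) le_rfl)
              (hL _ (by omega))
          have e : i + 1 + 1 = i + 2 := by omega
          simp only [hbl, e]
          calc (i + 1) * L (i + 2) = (i + 1) * 1 * L (i + 2) * 1 := by ring
            _ ≤ (i + 1) * W * L (i + 2) * L (i + 1) := h1
            _ ≤ p (i + 1) + (i + 1) * W * L (i + 2) * L (i + 1) := by omega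
        rw [le_div_iff₀ (by positivity)]
        calc (L (i + 2) : ℝ) * ((i + 1 : ℕ) : ℝ) = (((i + 1) * L (i + 2) : ℕ) : ℝ) := by
              push_cast; ring
          _ ≤ (bl (i + 1) : ℝ) := by exact_mod_cast hnat
      push_cast at ih hkey2 ⊢
      linarith
  -- the ε-argument
  refine le_of_forall_sub_le fun ε hε => le_liminf_of_le hcobdd ?_
  obtain ⟨cV, hcV⟩ : ∃ cV : ℝ, cV = (Fintype.card V : ℝ) + 1 := ⟨_, rfl⟩
  have hcV1 : (1 : ℝ) ≤ cV := by
    have h0 : (0 : ℝ) ≤ (Fintype.card V : ℝ) := Nat.cast_nonneg _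
    simp only [hcV]; linarith
  have hpcV : ∀ q, 1 ≤ q → ((p q : ℕ) : ℝ) ≤ cV := by
    intro q hq
    have := hp q hq
    simp only [hcV]
    have : ((p q : ℕ) : ℝ) ≤ (Fintype.card V : ℝ) := by exact_mod_cast this
    linarith
  obtain ⟨Q, hQdef⟩ : ∃ Q : ℕ, Q = max 1 ⌈8 * (T + 1) / ε⌉₊ := ⟨_, rfl⟩
  have hQ1 : 1 ≤ Q := hQdef ▸ le_max_left _ _
  have hQ0 : (0 : ℝ) < Q := by exact_mod_cast hQ1
  have hQb : (2 + 2 * T) / Q ≤ ε / 4 := by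
    have h8 : 8 * (T + 1) / ε ≤ (Q : ℝ) := by
      refine le_trans (Nat.le_ceil _) ?_
      rw [hQdef]
      exact_mod_cast le_max_right 1 ⌈8 * (T + 1) / ε⌉₊
    rw [div_le_div_iff₀ hQ0 (by norm_num)]
    have h9 : 8 * (T + 1) ≤ ε * Q := by
      rw [div_le_iff₀ hε] at h8
      linarith
    linarith
  obtain ⟨Con, hConDef⟩ : ∃ Con : ℝ, Con = (1 + T) * (S Q : ℝ) + T * (L 1 : ℝ) := ⟨_, rfl⟩
  have hCon0 : (0 : ℝ) ≤ Con := by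
    rw [hConDef]
    have h1T : (0 : ℝ) ≤ 1 + T := by linarith
    exact add_nonneg (mul_nonneg h1T (Nat.cast_nonneg _))
      (mul_nonneg hT0.le (Nat.cast_nonneg _))
  set N₁ : ℕ := ⌈Con / (ε / 4)⌉₊ with hN₁def
  obtain ⟨I₀, hI₀def⟩ : ∃ I₀ : ℕ, I₀ = max Q (max 1 ⌈16 * T * cV / ε⌉₊) := ⟨_, rfl⟩
  have hI₀Q : Q ≤ I₀ := hI₀def ▸ le_max_left _ _
  have hI₀1 : 1 ≤ I₀ := hI₀def ▸ le_trans (le_max_left 1 _) (le_max_right _ _)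
  filter_upwards [eventually_ge_atTop (max N₁ (max 1 (S I₀)))] with n hn
  have hnN₁ : N₁ ≤ n := le_trans (le_max_left _ _) hn
  have hn1 : 1 ≤ n := le_trans (le_trans (le_max_left 1 _) (le_max_right _ _)) hn
  have hnSI : S I₀ ≤ n := le_trans (le_trans (le_max_right 1 _) (le_max_right _ _)) hn
  have hn0R : (0 : ℝ) < n := by exact_mod_cast hn1
  -- locate n in the blocks
  obtain ⟨i, hiI, hSi, hn_lt⟩ : ∃ i, I₀ ≤ i ∧ S i ≤ n ∧ n < S (i + 1) := by
    refine ⟨Nat.findGreatest (fun i => S i ≤ n) n, ?_, ?_, ?_⟩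
    · exact Nat.le_findGreatest (le_trans (hSge I₀) hnSI) hnSI
    · exact Nat.findGreatest_spec (P := fun i => S i ≤ n) (Nat.zero_le n) (by simp [hS0])
    · by_contra hcon
      push_neg at hcon
      have h1 : Nat.findGreatest (fun i => S i ≤ n) n + 1 ≤ n := le_trans (hSge _) hcon
      exact Nat.findGreatest_is_greatest (P := fun i => S i ≤ n)
        (Nat.lt_succ_self _) h1 hcon
  have hi1 : 1 ≤ i := le_trans hI₀1 hiI
  -- pieces
  have h1 := hMain i (S i) le_rfl
  have hsb : n - S i ≤ bl (i + 1) := by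
    have := hSstep i
    omega
  have h2 : ((n - S i : ℕ) : ℝ) * (t j - 1 / ((i + 1 : ℕ) : ℝ))
      - T * ((L (i + 1) : ℝ) + (p (i + 1) : ℝ))
      ≤ ∑ x ∈ range (n - S i), f (S i + x) := by
    have := hB (i + 1) (by omega) (n - S i) hsb
    simpa using this
  have hcast : ((n - S i : ℕ) : ℝ) = (n : ℝ) - (S i : ℝ) := by push_cast [hSi]; ring
  rw [hcast] at h2
  have hsplit : ∑ m ∈ range n, f m
      = ∑ m ∈ range (S i), f m + ∑ x ∈ range (n - S i), f (S i + x) := by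
    conv_lhs => rw [← Nat.add_sub_cancel' hSi]
    rw [Finset.sum_range_add]
  -- deficit bounds
  have hSin : (S i : ℝ) ≤ (n : ℝ) := by exact_mod_cast hSi
  have hD1 : (∑ q ∈ Icc 1 i, (bl q : ℝ) / q) ≤ (S Q : ℝ) + (n : ℝ) / Q := by
    refine le_trans (hDbl Q hQ1 i) ?_
    have : (S i : ℝ) / Q ≤ (n : ℝ) / Q := by
      exact div_le_div_of_nonneg_right hSin hQ0.le
    linarith
  have hD2 : (∑ q ∈ Icc 1 i, (L q : ℝ)) ≤ (L 1 : ℝ) + (S Q : ℝ) + (n : ℝ) / Q := by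
    have h := hsumL (i - 1)
    rw [show i - 1 + 1 = i by omega] at h
    refine le_trans h ?_
    have h2' := hDbl Q hQ1 (i - 1)
    have h3' : (S (i - 1) : ℝ) ≤ (n : ℝ) := by
      have : S (i - 1) ≤ S i := hSmono (by omega)
      have : S (i - 1) ≤ n := le_trans this hSi
      exact_mod_cast this
    have h4' : (S (i - 1) : ℝ) / Q ≤ (n : ℝ) / Q := div_le_div_of_nonneg_right h3' hQ0.le
    linarith
  have hD3 : (∑ q ∈ Icc 1 i, (p q : ℝ)) ≤ (i : ℝ) * cV := by
    calc (∑ q ∈ Icc 1 i, (p q : ℝ)) ≤ ∑ q ∈ Icc 1 i, cV := by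
          refine Finset.sum_le_sum fun q hq => ?_
          rw [mem_Icc] at hq
          exact hpcV q hq.1
      _ = (i : ℝ) * cV := by
          rw [Finset.sum_const, Nat.card_Icc, nsmul_eq_mul]
          norm_num
  have hsplitD : (∑ q ∈ Icc 1 i, ((bl q : ℝ) / q + T * ((L q : ℝ) + (p q : ℝ))))
      = (∑ q ∈ Icc 1 i, (bl q : ℝ) / q)
        + T * ((∑ q ∈ Icc 1 i, (L q : ℝ)) + (∑ q ∈ Icc 1 i, (p q : ℝ))) := by
    simp only [mul_add, Finset.sum_add_distrib, Finset.mul_sum]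
  -- more individual bounds
  have hQi : (Q : ℝ) ≤ (i : ℝ) + 1 := by
    have : Q ≤ i + 1 := by omega
    exact_mod_cast this
  have hdiv1 : ((n : ℝ) - (S i : ℝ)) * (1 / ((i + 1 : ℕ) : ℝ)) ≤ (n : ℝ) / Q := by
    rw [mul_one_div]
    push_cast
    apply div_le_div₀ (le_of_lt hn0R) (by linarith) hQ0 hQi
  have hLi1 : (L (i + 1) : ℝ) ≤ (n : ℝ) / Q := by
    have hnat : Q * L (i + 1) ≤ n := by
      have h1 : i * L (i + 1) ≤ bl i := by
        have h2 : i * 1 * L (i + 1) * 1 ≤ i * W * L (i + 1) * L i :=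
          Nat.mul_le_mul (Nat.mul_le_mul (Nat.mul_le_mul le_rfl hW1) le_rfl) (hL _ hi1)
        simp only [hbl]
        calc i * L (i + 1) = i * 1 * L (i + 1) * 1 := by ring
          _ ≤ i * W * L (i + 1) * L i := h2
          _ ≤ p i + i * W * L (i + 1) * L i := by omega
      have h3 : bl i ≤ S i := by
        have := hSstep (i - 1)
        rw [show i - 1 + 1 = i by omega] at this
        omega
      have h4 : Q * L (i + 1) ≤ i * L (i + 1) := Nat.mul_le_mul_right _ (by omega)
      omega
    rw [le_div_iff₀ hQ0]
    calc (L (i + 1) : ℝ) * Q = ((Q * L (i + 1) : ℕ) : ℝ) := by push_cast; ring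
      _ ≤ (n : ℝ) := by exact_mod_cast hnat
  have hLi1' : T * (L (i + 1) : ℝ) ≤ T * ((n : ℝ) / Q) :=
    mul_le_mul_of_nonneg_left hLi1 hT0.le
  have hp1' : T * (p (i + 1) : ℝ) ≤ T * cV :=
    mul_le_mul_of_nonneg_left (hpcV (i + 1) (by omega)) hT0.le
  have hD2' : T * (∑ q ∈ Icc 1 i, (L q : ℝ))
      ≤ T * ((L 1 : ℝ) + (S Q : ℝ) + (n : ℝ) / Q) :=
    mul_le_mul_of_nonneg_left hD2 hT0.le
  have hD3' : T * (∑ q ∈ Icc 1 i, (p q : ℝ)) ≤ T * ((i : ℝ) * cV) :=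
    mul_le_mul_of_nonneg_left hD3 hT0.le
  -- the three ε/4 bounds
  have hQn : (2 + 2 * T) * ((n : ℝ) / Q) ≤ ε / 4 * n := by
    have : (2 + 2 * T) * ((n : ℝ) / Q) = ((2 + 2 * T) / Q) * n := by ring
    rw [this]
    exact mul_le_mul_of_nonneg_right hQb (le_of_lt hn0R)
  have hConn : Con ≤ ε / 4 * n := by
    have h1 : Con / (ε / 4) ≤ (N₁ : ℝ) := Nat.le_ceil _
    have h2 : (N₁ : ℝ) ≤ (n : ℝ) := by exact_mod_cast hnN₁
    have h3 : Con / (ε / 4) ≤ (n : ℝ) := le_trans h1 h2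
    rw [div_le_iff₀ (by linarith)] at h3
    linarith
  have hIV : T * (cV * ((i : ℝ) + 1)) ≤ ε / 4 * n := by
    have hi16 : 16 * T * cV ≤ ε * i := by
      have h1 : 16 * T * cV / ε ≤ (I₀ : ℝ) := by
        refine le_trans (Nat.le_ceil _) ?_
        rw [hI₀def]
        exact_mod_cast le_trans (le_max_right 1 _) (le_max_right Q _)
      have h2 : (I₀ : ℝ) ≤ (i : ℝ) := by exact_mod_cast hiI
      have h3 : 16 * T * cV / ε ≤ (i : ℝ) := le_trans h1 h2
      rw [div_le_iff₀ hε] at h3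
      linarith
    have hsq : (i : ℝ) * i ≤ 2 * n := by
      have h1 : i * i ≤ 2 * S i := hSsq i
      have : i * i ≤ 2 * n := le_trans h1 (by omega)
      exact_mod_cast this
    have hi1R : (1 : ℝ) ≤ i := by exact_mod_cast hi1
    have c1 : T * (cV * ((i : ℝ) + 1)) ≤ T * (cV * (2 * i)) :=
      mul_le_mul_of_nonneg_left
        (mul_le_mul_of_nonneg_left (by linarith) (by linarith)) hT0.le
    have c2 : 16 * T * cV * i ≤ (ε * i) * i :=
      mul_le_mul_of_nonneg_right hi16 (by linarith)
    have c3 : ε * ((i : ℝ) * i) ≤ ε * (2 * n) :=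
      mul_le_mul_of_nonneg_left hsq hε.le
    linarith [c1, c2, c3]
  -- final assembly
  have hexp : ((n : ℝ) - (S i : ℝ)) * (t j - 1 / ((i + 1 : ℕ) : ℝ))
      = ((n : ℝ) - (S i : ℝ)) * t j
        - ((n : ℝ) - (S i : ℝ)) * (1 / ((i + 1 : ℕ) : ℝ)) := by ring
  have hfinal : (t j - ε) * n ≤ ∑ m ∈ range n, f m := by
    rw [hsplit]
    rw [hexp] at h2
    rw [hsplitD] at h1
    linarith
  rw [le_div_iff₀ hn0R]
  exact hfinal
end
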